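/- Let U, Ũ, V, Ṽ : ℝ × ℝ → Matrix (Fin 2) (Fin 2) ℂ be C¹ and let L : ℝ × ℝ → Matrix (Fin 2) (Fin 2) ℂ be C², invertible everywhere, satisfying ∂ₓL = ŨL − LU and ∂ₜL = ṼL − LV. Then the zero curvature condition ∂ₜU − ∂ₓV + [U,V] = 0 holds for all (x,t) if and only if ∂ₜŨ − ∂ₓṼ + [Ũ,Ṽ] = 0 holds for all (x,t). -/

import Mathlib

open Matrix

/-- Partial derivative in the first variable, entrywise, of a matrix-valued function. -/
noncomputable def matPderivX (F : ℝ × ℝ → Matrix (Fin 2) (Fin 2) ℂ) (x t : ℝ) :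
    Matrix (Fin 2) (Fin 2) ℂ :=
  Matrix.of fun i j => deriv (fun x' => F (x', t) i j) x

/-- Partial derivative in the second variable, entrywise, of a matrix-valued function. -/
noncomputable def matPderivT (F : ℝ × ℝ → Matrix (Fin 2) (Fin 2) ℂ) (x t : ℝ) :
    Matrix (Fin 2) (Fin 2) ℂ :=
  Matrix.of fun i j => deriv (fun t' => F (x, t') i j) t

/-! Differentiating `∂ₓL = ŨL − LU` in `t` and `∂ₜL = ṼL − LV` in `x`, the equality of the
mixed partials of `L` becomes `F̃ L = L F`, where `F` and `F̃` are the curvatures of `(U, V)` and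
`(Ũ, Ṽ)`. As `L` is invertible, `F = 0` if and only if `F̃ = 0`. -/

section Slices

variable {F : Type*} [NormedAddCommGroup F] [NormedSpace ℝ F] {f : ℝ × ℝ → F} {x t : ℝ}

theorem HasFDerivAt.hasDerivAt_slice_fst {f' : ℝ × ℝ →L[ℝ] F} (hf : HasFDerivAt f f' (x, t)) :
    HasDerivAt (fun x' => f (x', t)) (f' (1, 0)) x :=
  hf.comp_hasDerivAt x ((hasDerivAt_id x).prodMk (hasDerivAt_const x t))

theorem HasFDerivAt.hasDerivAt_slice_snd {f' : ℝ × ℝ →L[ℝ] F} (hf : HasFDerivAt f f' (x, t)) :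
    HasDerivAt (fun t' => f (x, t')) (f' (0, 1)) t :=
  hf.comp_hasDerivAt t ((hasDerivAt_const t x).prodMk (hasDerivAt_id t))

theorem deriv_deriv_slice_comm (hf : Differentiable ℝ f)
    (hf' : DifferentiableAt ℝ (fderiv ℝ f) (x, t)) :
    deriv (fun t' => deriv (fun x' => f (x', t')) x) t =
      deriv (fun x' => deriv (fun t' => f (x', t')) t) x := by
  have hx : ∀ t', deriv (fun x' => f (x', t')) x = fderiv ℝ f (x, t') (1, 0) := fun t' =>
    (hf _).hasFDerivAt.hasDerivAt_slice_fst.deriv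
  have ht : ∀ x', deriv (fun t' => f (x', t')) t = fderiv ℝ f (x', t) (0, 1) := fun x' =>
    (hf _).hasFDerivAt.hasDerivAt_slice_snd.deriv
  simp only [hx, ht]
  rw [(hf'.hasFDerivAt.hasDerivAt_slice_snd.clm_apply (hasDerivAt_const t _)).deriv,
    (hf'.hasFDerivAt.hasDerivAt_slice_fst.clm_apply (hasDerivAt_const x _)).deriv]
  simpa using second_derivative_symmetric (fun y => (hf y).hasFDerivAt) hf'.hasFDerivAt
    ((0 : ℝ), (1 : ℝ)) ((1 : ℝ), (0 : ℝ))

end Slices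

theorem Matrix.hasDerivAt_mul_apply {𝕜 R m n p : Type*} [NontriviallyNormedField 𝕜]
    [NormedRing R] [NormedAlgebra 𝕜 R] [Fintype n] {A : 𝕜 → Matrix m n R} {B : 𝕜 → Matrix n p R}
    {A' : Matrix m n R} {B' : Matrix n p R} {s : 𝕜}
    (hA : ∀ i j, HasDerivAt (fun s => A s i j) (A' i j) s)
    (hB : ∀ i j, HasDerivAt (fun s => B s i j) (B' i j) s) (i : m) (k : p) :
    HasDerivAt (fun s => (A s * B s) i k) ((A' * B s + A s * B') i k) s := by
  simp only [mul_apply, add_apply, ← Finset.sum_add_distrib]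
  exact HasDerivAt.fun_sum fun j _ => (hA i j).mul (hB j k)

section MatrixPartials

variable {A B L : ℝ × ℝ → Matrix (Fin 2) (Fin 2) ℂ} {x t : ℝ}

theorem hasDerivAt_matPderivX (hA : ∀ i j, DifferentiableAt ℝ (fun p => A p i j) (x, t))
    (i j : Fin 2) : HasDerivAt (fun x' => A (x', t) i j) (matPderivX A x t i j) x :=
  (hA i j).hasFDerivAt.hasDerivAt_slice_fst.differentiableAt.hasDerivAt

theorem hasDerivAt_matPderivT (hA : ∀ i j, DifferentiableAt ℝ (fun p => A p i j) (x, t))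
    (i j : Fin 2) : HasDerivAt (fun t' => A (x, t') i j) (matPderivT A x t i j) t :=
  (hA i j).hasFDerivAt.hasDerivAt_slice_snd.differentiableAt.hasDerivAt

theorem matPderivX_mul_sub_mul (hA : ∀ i j, DifferentiableAt ℝ (fun p => A p i j) (x, t))
    (hL : ∀ i j, DifferentiableAt ℝ (fun p => L p i j) (x, t))
    (hB : ∀ i j, DifferentiableAt ℝ (fun p => B p i j) (x, t)) :
    matPderivX (fun p => A p * L p - L p * B p) x t =
      matPderivX A x t * L (x, t) + A (x, t) * matPderivX L x t -
        (matPderivX L x t * B (x, t) + L (x, t) * matPderivX B x t) := by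
  ext i k
  exact ((hasDerivAt_mul_apply (hasDerivAt_matPderivX hA) (hasDerivAt_matPderivX hL) i k).sub
    (hasDerivAt_mul_apply (hasDerivAt_matPderivX hL) (hasDerivAt_matPderivX hB) i k)).deriv

theorem matPderivT_mul_sub_mul (hA : ∀ i j, DifferentiableAt ℝ (fun p => A p i j) (x, t))
    (hL : ∀ i j, DifferentiableAt ℝ (fun p => L p i j) (x, t))
    (hB : ∀ i j, DifferentiableAt ℝ (fun p => B p i j) (x, t)) :
    matPderivT (fun p => A p * L p - L p * B p) x t =
      matPderivT A x t * L (x, t) + A (x, t) * matPderivT L x t -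
        (matPderivT L x t * B (x, t) + L (x, t) * matPderivT B x t) := by
  ext i k
  exact ((hasDerivAt_mul_apply (hasDerivAt_matPderivT hA) (hasDerivAt_matPderivT hL) i k).sub
    (hasDerivAt_mul_apply (hasDerivAt_matPderivT hL) (hasDerivAt_matPderivT hB) i k)).deriv

theorem matPderivT_matPderivX_comm (hL : ∀ i j, ContDiff ℝ 2 fun p => L p i j) :
    matPderivT (fun p => matPderivX L p.1 p.2) x t =
      matPderivX (fun p => matPderivT L p.1 p.2) x t := by
  ext i j
  exact deriv_deriv_slice_comm ((hL i j).differentiable two_ne_zero)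
    (((hL i j).fderiv_right (m := 1) le_rfl).differentiable one_ne_zero _)

end MatrixPartials

noncomputable def curvature (U V : ℝ × ℝ → Matrix (Fin 2) (Fin 2) ℂ) (x t : ℝ) :
    Matrix (Fin 2) (Fin 2) ℂ :=
  matPderivT U x t - matPderivX V x t + (U (x, t) * V (x, t) - V (x, t) * U (x, t))

theorem curvature_mul_eq_mul_curvature {U Ut V Vt L : ℝ × ℝ → Matrix (Fin 2) (Fin 2) ℂ} {x t : ℝ}
    (hU : ∀ i j, DifferentiableAt ℝ (fun p => U p i j) (x, t))
    (hUt : ∀ i j, DifferentiableAt ℝ (fun p => Ut p i j) (x, t))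
    (hV : ∀ i j, DifferentiableAt ℝ (fun p => V p i j) (x, t))
    (hVt : ∀ i j, DifferentiableAt ℝ (fun p => Vt p i j) (x, t))
    (hL : ∀ i j, ContDiff ℝ 2 fun p => L p i j)
    (hLx : ∀ x t, matPderivX L x t = Ut (x, t) * L (x, t) - L (x, t) * U (x, t))
    (hLt : ∀ x t, matPderivT L x t = Vt (x, t) * L (x, t) - L (x, t) * V (x, t)) :
    curvature Ut Vt x t * L (x, t) = L (x, t) * curvature U V x t := by
  have hL₁ : ∀ i j, DifferentiableAt ℝ (fun p => L p i j) (x, t) := fun i j =>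
    (hL i j).differentiable two_ne_zero _
  have mixed := matPderivT_matPderivX_comm hL (x := x) (t := t)
  simp only [hLx, hLt] at mixed
  rw [matPderivT_mul_sub_mul hUt hL₁ hU, matPderivX_mul_sub_mul hVt hL₁ hV, hLx, hLt] at mixed
  rw [← sub_eq_zero, ← sub_eq_zero.mpr mixed, curvature, curvature]
  noncomm_ring

theorem backlund_preserves_zero_curvature
    (U Ut V Vt L : ℝ × ℝ → Matrix (Fin 2) (Fin 2) ℂ)
    (hU : ∀ i j, ContDiff ℝ 1 (fun p => U p i j))
    (hUt : ∀ i j, ContDiff ℝ 1 (fun p => Ut p i j))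
    (hV : ∀ i j, ContDiff ℝ 1 (fun p => V p i j))
    (hVt : ∀ i j, ContDiff ℝ 1 (fun p => Vt p i j))
    (hL : ∀ i j, ContDiff ℝ 2 (fun p => L p i j))
    (hLinv : ∀ p, IsUnit (L p))
    (hLx : ∀ x t, matPderivX L x t = Ut (x, t) * L (x, t) - L (x, t) * U (x, t))
    (hLt : ∀ x t, matPderivT L x t = Vt (x, t) * L (x, t) - L (x, t) * V (x, t)) :
    (∀ x t, matPderivT U x t - matPderivX V x t +
        (U (x, t) * V (x, t) - V (x, t) * U (x, t)) = 0) ↔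
    (∀ x t, matPderivT Ut x t - matPderivX Vt x t +
        (Ut (x, t) * Vt (x, t) - Vt (x, t) * Ut (x, t)) = 0) := by
  have diff : ∀ F : ℝ × ℝ → Matrix (Fin 2) (Fin 2) ℂ, (∀ i j, ContDiff ℝ 1 fun p => F p i j) →
      ∀ p i j, DifferentiableAt ℝ (fun p => F p i j) p := fun F hF p i j =>
    (hF i j).differentiable one_ne_zero p
  have intertwine (x t : ℝ) : curvature Ut Vt x t * L (x, t) = L (x, t) * curvature U V x t :=
    curvature_mul_eq_mul_curvature (diff U hU _) (diff Ut hUt _) (diff V hV _) (diff Vt hVt _)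
      hL hLx hLt
  refine forall₂_congr fun x t => ?_
  change curvature U V x t = 0 ↔ curvature Ut Vt x t = 0
  rw [← (hLinv (x, t)).mul_right_eq_zero, ← intertwine, (hLinv (x, t)).mul_left_eq_zero]
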